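/- In the setting of an agent i with altruism level β moving from S_i to S'_i in a congestion game with linear delays d_e(x) = a_e·x, define Δ_N = Σ_{e∈S_i∖S'_i} a_e·n_e − Σ_{e∈S'_i∖S_i} a_e·(n_e+1) and Δ_C = Σ_{e∈S_i∖S'_i} (2a_e·n_e − a_e) − Σ_{e∈S'_i∖S_i} (2a_e·n_e + a_e). Then the decrease of the weighted potential satisfies Φ(S) − Φ(S') = (3/(1+β))·((1−β)·Δ_N + β·Δ_C). -/
import Mathlib


open Finset

def cong {N E : Type*} [Fintype N] [DecidableEq E] (S : N → Finset E) (e : E) : ℕ :=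
  (Finset.univ.filter (fun i => e ∈ S i)).card

/-- The weighted potential Φ for linear delays dₑ(x) = aₑ·x. -/
noncomputable def linPot {N E : Type*} [Fintype N] [Fintype E] [DecidableEq E]
    (a : E → ℝ) (β : N → ℝ) (S : N → Finset E) : ℝ :=
  (∑ e : E, ∑ j ∈ Finset.Icc 1 (cong S e), a e * (j : ℝ)) +
    (∑ e : E, a e * (cong S e : ℝ) ^ 2) -
    ∑ i : N, ∑ e ∈ S i, ((2 * β i - 1) / (β i + 1)) * a e

lemma sum_Icc_cast_real (n : ℕ) : ∑ j ∈ Finset.Icc 1 n, (j : ℝ) = n * (n + 1) / 2 := by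
  induction n with
  | zero => simp
  | succ n ih =>
    rw [Finset.sum_Icc_succ_top (by omega : 1 ≤ n + 1), ih]
    push_cast
    ring

lemma cong_update {N E : Type*} [Fintype N] [DecidableEq N] [DecidableEq E]
    (S : N → Finset E) (i : N) (T : Finset E) (e : E) :
    (cong (Function.update S i T) e : ℝ) =
      (cong S e : ℝ) + (if e ∈ T then 1 else 0) - (if e ∈ S i then 1 else 0) := by
  have h1 : (cong (Function.update S i T) e : ℝ)
      = ∑ j : N, (if e ∈ Function.update S i T j then (1:ℝ) else 0) := by
    rw [cong, Finset.card_filter]; push_cast; rfl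
  have h2 : (cong S e : ℝ) = ∑ j : N, (if e ∈ S j then (1:ℝ) else 0) := by
    rw [cong, Finset.card_filter]; push_cast; rfl
  have key : (cong (Function.update S i T) e : ℝ) - (cong S e : ℝ)
      = (if e ∈ T then 1 else 0) - (if e ∈ S i then 1 else 0) := by
    rw [h1, h2, ← Finset.sum_sub_distrib]
    rw [Finset.sum_eq_single_of_mem i (Finset.mem_univ i)]
    · simp
    · intro j _ hj
      simp [Function.update_of_ne hj]
  linarith

lemma linPot_closed {N E : Type*} [Fintype N] [Fintype E] [DecidableEq E]
    (a : E → ℝ) (β : N → ℝ) (S : N → Finset E) :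
    linPot a β S = ∑ e : E, a e * (3 * (cong S e : ℝ) ^ 2 + (cong S e : ℝ)) / 2 -
      ∑ i : N, ∑ e ∈ S i, ((2 * β i - 1) / (β i + 1)) * a e := by
  unfold linPot
  have : ∀ e : E, ∑ j ∈ Finset.Icc 1 (cong S e), a e * (j : ℝ)
      = a e * ((cong S e : ℝ) * ((cong S e : ℝ) + 1) / 2) := by
    intro e
    rw [← Finset.mul_sum, sum_Icc_cast_real]
  simp_rw [this]
  rw [← Finset.sum_add_distrib]
  congr 1
  apply Finset.sum_congr rfl
  intro e _
  ring

/-- the potential difference identity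
Φ(S) − Φ(S') = (3/(1+β))·((1−β)·Δ_N + β·Δ_C) for a deviation of agent `i`
with altruism level β from `S i` to `T`. -/
theorem potential_difference_identity
    {N E : Type*} [Fintype N] [DecidableEq N] [Fintype E] [DecidableEq E]
    (a : E → ℝ) (β : N → ℝ) (i : N) (hβ : β i ∈ Set.Icc (0 : ℝ) 1)
    (S : N → Finset E) (T : Finset E) :
    linPot a β S - linPot a β (Function.update S i T) =
      (3 / (1 + β i)) *
        ((1 - β i) *
            ((∑ e ∈ S i \ T, a e * (cong S e : ℝ)) -
              ∑ e ∈ T \ S i, a e * ((cong S e : ℝ) + 1)) +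
          β i *
            ((∑ e ∈ S i \ T, (2 * a e * (cong S e : ℝ) - a e)) -
              ∑ e ∈ T \ S i, (2 * a e * (cong S e : ℝ) + a e))) := by
  obtain ⟨hb0, hb1⟩ := hβ
  have hb : (1 : ℝ) + β i ≠ 0 := by linarith
  set c : ℝ := (2 * β i - 1) / (β i + 1) with hc
  -- the last (agent) sum difference
  have hlast : (∑ i' : N, ∑ e ∈ S i', ((2 * β i' - 1) / (β i' + 1)) * a e) -
      (∑ i' : N, ∑ e ∈ Function.update S i T i', ((2 * β i' - 1) / (β i' + 1)) * a e)
      = c * ((∑ e ∈ S i \ T, a e) - ∑ e ∈ T \ S i, a e) := by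
    rw [← Finset.sum_sub_distrib]
    rw [Finset.sum_eq_single_of_mem i (Finset.mem_univ i)]
    · rw [Function.update_self]
      have h1 : ∑ e ∈ S i, c * a e = c * ∑ e ∈ S i, a e := (Finset.mul_sum _ _ _).symm
      have h2 : ∑ e ∈ T, c * a e = c * ∑ e ∈ T, a e := (Finset.mul_sum _ _ _).symm
      rw [h1, h2, ← mul_sub]
      congr 1
      exact (Finset.sum_sdiff_sub_sum_sdiff).symm
    · intro j _ hj
      rw [Function.update_of_ne hj, sub_self]
  -- per-edge difference function
  set D : E → ℝ := fun e =>
    a e * (3 * (cong S e : ℝ) ^ 2 + (cong S e : ℝ)) / 2 -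
      a e * (3 * (cong (Function.update S i T) e : ℝ) ^ 2 +
        (cong (Function.update S i T) e : ℝ)) / 2 with hD
  have hDzero : ∀ e, e ∉ (S i \ T) ∪ (T \ S i) → D e = 0 := by
    intro e he
    have h1 : (cong (Function.update S i T) e : ℝ) = (cong S e : ℝ) := by
      rw [cong_update]
      by_cases hS : e ∈ S i <;> by_cases hT : e ∈ T <;>
        simp_all [Finset.mem_union, Finset.mem_sdiff]
    simp [hD, h1]
  have hsumD : ∑ e : E, D e = ∑ e ∈ (S i \ T) ∪ (T \ S i), D e := by
    refine (Finset.sum_subset (Finset.subset_univ _) ?_).symm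
    intro e _ he
    exact hDzero e he
  have hdisj : Disjoint (S i \ T) (T \ S i) := by
    exact disjoint_sdiff_sdiff
  have hD1 : ∀ e ∈ S i \ T, D e = a e * (3 * (cong S e : ℝ) - 1) := by
    intro e he
    have hS : e ∈ S i := (Finset.mem_sdiff.mp he).1
    have hT : e ∉ T := (Finset.mem_sdiff.mp he).2
    have h1 : (cong (Function.update S i T) e : ℝ) = (cong S e : ℝ) - 1 := by
      rw [cong_update]; simp [hS, hT]
    simp only [hD, h1]
    ring
  have hD2 : ∀ e ∈ T \ S i, D e = -(a e * (3 * (cong S e : ℝ) + 2)) := by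
    intro e he
    have hT : e ∈ T := (Finset.mem_sdiff.mp he).1
    have hS : e ∉ S i := (Finset.mem_sdiff.mp he).2
    have h1 : (cong (Function.update S i T) e : ℝ) = (cong S e : ℝ) + 1 := by
      rw [cong_update]; simp [hS, hT]
    simp only [hD, h1]
    ring
  have hmain : linPot a β S - linPot a β (Function.update S i T)
      = (∑ e ∈ S i \ T, a e * (3 * (cong S e : ℝ) - 1))
        - (∑ e ∈ T \ S i, a e * (3 * (cong S e : ℝ) + 2))
        - c * ((∑ e ∈ S i \ T, a e) - ∑ e ∈ T \ S i, a e) := by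
    rw [linPot_closed, linPot_closed]
    have : ∑ e : E, a e * (3 * (cong S e : ℝ) ^ 2 + (cong S e : ℝ)) / 2 -
        ∑ e : E, a e * (3 * (cong (Function.update S i T) e : ℝ) ^ 2 +
          (cong (Function.update S i T) e : ℝ)) / 2 = ∑ e : E, D e := by
      rw [← Finset.sum_sub_distrib]
    rw [sub_sub_sub_comm]
    rw [this, hlast, hsumD, Finset.sum_union hdisj,
      Finset.sum_congr rfl hD1, Finset.sum_congr rfl hD2, Finset.sum_neg_distrib]
    ring
  rw [hmain]
  -- reduce to identity in the four basic sums
  have e1 : ∑ e ∈ S i \ T, a e * (3 * (cong S e : ℝ) - 1)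
      = 3 * (∑ e ∈ S i \ T, a e * (cong S e : ℝ)) - ∑ e ∈ S i \ T, a e := by
    rw [Finset.mul_sum, ← Finset.sum_sub_distrib]
    exact Finset.sum_congr rfl fun e _ => by ring
  have e2 : ∑ e ∈ T \ S i, a e * (3 * (cong S e : ℝ) + 2)
      = 3 * (∑ e ∈ T \ S i, a e * (cong S e : ℝ)) + 2 * ∑ e ∈ T \ S i, a e := by
    rw [Finset.mul_sum, Finset.mul_sum, ← Finset.sum_add_distrib]
    exact Finset.sum_congr rfl fun e _ => by ring
  have e3 : ∑ e ∈ T \ S i, a e * ((cong S e : ℝ) + 1)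
      = (∑ e ∈ T \ S i, a e * (cong S e : ℝ)) + ∑ e ∈ T \ S i, a e := by
    rw [← Finset.sum_add_distrib]
    exact Finset.sum_congr rfl fun e _ => by ring
  have e4 : ∑ e ∈ S i \ T, (2 * a e * (cong S e : ℝ) - a e)
      = 2 * (∑ e ∈ S i \ T, a e * (cong S e : ℝ)) - ∑ e ∈ S i \ T, a e := by
    rw [Finset.mul_sum, ← Finset.sum_sub_distrib]
    exact Finset.sum_congr rfl fun e _ => by ring
  have e5 : ∑ e ∈ T \ S i, (2 * a e * (cong S e : ℝ) + a e)
      = 2 * (∑ e ∈ T \ S i, a e * (cong S e : ℝ)) + ∑ e ∈ T \ S i, a e := by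
    rw [Finset.mul_sum, ← Finset.sum_add_distrib]
    exact Finset.sum_congr rfl fun e _ => by ring
  rw [e1, e2, e3, e4, e5, hc]
  have hb' : β i + 1 ≠ 0 := by linarith
  field_simp
  ring
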